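/- Let n ≥ 1, N = 2n + 1, E > 0 and T ∈ (0, ∞). On (ℂ²)^{⊗N} with standard basis {e_b : b ∈ {0,1}^N}, let ρ = γ_T^{⊗N} where γ_T = diag(1, e^{−E/T})/(1 + e^{−E/T}), and let A = I₂^{⊗2n} ⊗ diag(0,1) be the projector onto the upper state of the last qubit. Then every unitary U attaining the minimum of tr(U ρ U† A) over all unitaries maps the span of {e_b : wgt(b) ≤ n} onto the span of {e_w : w_N = 0} and the span of {e_b : wgt(b) > n} onto the span of {e_w : w_N = 1}; hence after applying U the last qubit of a computational basis input b records MAJORITY(b). -/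

import Mathlib

/-- The Gibbs occupation probability of level `j ∈ {0,1}` of a two-level
system with energy gap `E` at temperature `T`. -/
noncomputable def qubitProb (E T : ℝ) (j : Fin 2) : ℝ :=
  (if j = 0 then 1 else Real.exp (-E / T)) / (1 + Real.exp (-E / T))

/-!
In the computational basis `ρ = diag p` and `A` are both diagonal, so for a unitary `V` the
objective is `∑_b p_b c_b` with `c_b = ∑_{w_N = 1} |V_{wb}|²`; as columns and rows of `V` are
unit vectors, `0 ≤ c_b ≤ 1` and `∑_b c_b = 2^{2n}`. A permutation matrix sending the `2^{2n}`
states of weight `≤ n` onto those with `w_N = 0` attains `∑_{wgt b > n} p_b`. Since every `p_b`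
with `wgt b ≤ n` is strictly larger than every `p_b` with `wgt b > n`, a unitary doing at least
as well must have `c_b = 0` for `wgt b ≤ n` and `c_b = 1` for `wgt b > n` (the equality case of
the bathtub principle). Hence `U` is block-structured, and, being invertible, it maps the two
spans of basis vectors onto each other.
-/

open Finset Matrix

section BasisSpan

variable {ι R : Type*} [DecidableEq ι]

variable (R) in
def basisSpan [Semiring R] (P : ι → Prop) : Submodule R (ι → R) :=
  Submodule.span R {v | ∃ b, P b ∧ v = Pi.single b 1}

variable [Fintype ι]

theorem mem_basisSpan_iff [Semiring R] {P : ι → Prop} {v : ι → R} :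
    v ∈ basisSpan R P ↔ ∀ b, ¬ P b → v b = 0 := by
  constructor
  · intro hv
    have hle : basisSpan R P ≤ Submodule.pi {b | ¬ P b} fun _ => ⊥ := by
      refine Submodule.span_le.mpr ?_
      rintro _ ⟨b, hb, rfl⟩ w hw
      simp [show w ≠ b by rintro rfl; exact hw hb]
    simpa using hle hv
  · intro hv
    rw [← Finset.univ_sum_single v]
    refine Submodule.sum_mem _ fun b _ => ?_
    by_cases hb : P b
    · rw [← mul_one (v b), ← smul_eq_mul, Pi.single_smul']
      exact Submodule.smul_mem _ _ (Submodule.subset_span ⟨b, hb, rfl⟩)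
    · simp [hv b hb]

theorem mulVec_mem_basisSpan [Semiring R] {M : Matrix ι ι R} {P Q : ι → Prop}
    (hM : ∀ w b, M w b ≠ 0 → P b → Q w) {v : ι → R} (hv : v ∈ basisSpan R P) :
    M *ᵥ v ∈ basisSpan R Q := by
  rw [mem_basisSpan_iff] at hv ⊢
  intro w hw
  refine Finset.sum_eq_zero fun b _ => ?_
  by_cases hb : P b
  · exact mul_eq_zero_of_left (by by_contra h; exact hw (hM w b h hb)) _
  · exact mul_eq_zero_of_right _ (hv b hb)

theorem map_mulVecLin_basisSpan [CommRing R] [StarRing R] {U : Matrix ι ι R}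
    (hU : U ∈ unitaryGroup ι R) {P Q : ι → Prop} (hUPQ : ∀ w b, U w b ≠ 0 → (Q w ↔ P b)) :
    (basisSpan R P).map U.mulVecLin = basisSpan R Q := by
  refine le_antisymm (Submodule.map_le_iff_le_comap.mpr fun v hv => ?_) fun v hv => ?_
  · exact mulVec_mem_basisSpan (fun w b h => (hUPQ w b h).2) hv
  · refine ⟨star U *ᵥ v, mulVec_mem_basisSpan (fun b w h => (hUPQ w b ?_).1) hv, ?_⟩
    · simpa [star_apply] using h
    · simp [mulVec_mulVec, mem_unitaryGroup_iff.mp hU]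

end BasisSpan

theorem eq_zero_and_eq_one_of_sum_mul_le {ι : Type*} [Fintype ι] [DecidableEq ι]
    {p c : ι → ℝ} {L : Finset ι} {α β : ℝ} (hβα : β < α)
    (hα : ∀ b ∈ L, α ≤ p b) (hβ : ∀ b ∉ L, p b ≤ β) (hc₀ : ∀ b, 0 ≤ c b) (hc₁ : ∀ b, c b ≤ 1)
    (hsum : ∑ b, c b = #Lᶜ) (hle : ∑ b, p b * c b ≤ ∑ b ∈ Lᶜ, p b) :
    (∀ b ∈ L, c b = 0) ∧ ∀ b ∉ L, c b = 1 := by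
  set t := ∑ b ∈ L, c b
  have hdeficit : ∑ b ∈ Lᶜ, (1 - c b) = t := by
    rw [Finset.sum_sub_distrib, Finset.sum_const, nsmul_one, ← hsum,
      ← Finset.sum_add_sum_compl L c]
    ring
  have hgain : α * t ≤ ∑ b ∈ L, p b * c b := by
    rw [Finset.mul_sum]
    exact Finset.sum_le_sum fun b hb => mul_le_mul_of_nonneg_right (hα b hb) (hc₀ b)
  have hloss : ∑ b ∈ Lᶜ, p b * (1 - c b) ≤ β * t := by
    rw [← hdeficit, Finset.mul_sum]
    exact Finset.sum_le_sum fun b hb =>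
      mul_le_mul_of_nonneg_right (hβ b (Finset.mem_compl.mp hb)) (sub_nonneg.mpr (hc₁ b))
  have hsplit : ∑ b, p b * c b =
      ∑ b ∈ L, p b * c b + ∑ b ∈ Lᶜ, p b - ∑ b ∈ Lᶜ, p b * (1 - c b) := by
    rw [← Finset.sum_add_sum_compl L, add_sub_assoc, ← Finset.sum_sub_distrib]
    congr 1
    exact Finset.sum_congr rfl fun b _ => by ring
  have ht : t = 0 := by
    have : 0 ≤ t := Finset.sum_nonneg fun b _ => hc₀ b
    nlinarith
  refine ⟨fun b hb => (Finset.sum_eq_zero_iff_of_nonneg fun b _ => hc₀ b).mp ht b hb,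
    fun b hb => ?_⟩
  have := (Finset.sum_eq_zero_iff_of_nonneg fun b _ => sub_nonneg.mpr (hc₁ b)).mp
    (hdeficit.trans ht) b (Finset.mem_compl.mpr hb)
  linarith

section Refrigerator

variable {ι : Type*} [Fintype ι] [DecidableEq ι]

noncomputable def excitedPopulation (p : ι → ℝ) (Q : ι → Prop) [DecidablePred Q]
    (V : Matrix ι ι ℂ) : ℝ :=
  (trace (V * diagonal (fun b => (p b : ℂ)) * star V *
    diagonal (fun b => if Q b then 1 else 0))).re

theorem excitedPopulation_eq_sum (p : ι → ℝ) (Q : ι → Prop) [DecidablePred Q]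
    (V : Matrix ι ι ℂ) :
    excitedPopulation p Q V = ∑ w with Q w, ∑ b, p b * Complex.normSq (V w b) := by
  simp only [excitedPopulation, trace, Matrix.diag, mul_diagonal]
  simp only [mul_apply, diagonal_apply, mul_ite, mul_zero, Finset.sum_ite_eq', Finset.mem_univ,
    if_true, star_apply, RCLike.star_def]
  rw [Finset.sum_filter, Complex.re_sum]
  refine Finset.sum_congr rfl fun w _ => ?_
  split_ifs
  · rw [mul_one, Complex.re_sum]
    refine Finset.sum_congr rfl fun b _ => ?_
    rw [mul_comm (V w b), mul_assoc, Complex.mul_conj]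
    norm_cast
  · simp

theorem sum_normSq_apply_left {U : Matrix ι ι ℂ} (hU : U ∈ unitaryGroup ι ℂ) (b : ι) :
    ∑ w, Complex.normSq (U w b) = 1 := by
  have h := congr_fun₂ (mem_unitaryGroup_iff'.mp hU) b b
  simp only [mul_apply, star_apply, one_apply_eq, RCLike.star_def,
    ← Complex.normSq_eq_conj_mul_self] at h
  exact_mod_cast h

theorem sum_normSq_apply_right {U : Matrix ι ι ℂ} (hU : U ∈ unitaryGroup ι ℂ) (w : ι) :
    ∑ b, Complex.normSq (U w b) = 1 := by
  have h := congr_fun₂ (mem_unitaryGroup_iff.mp hU) w w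
  simp only [mul_apply, star_apply, one_apply_eq, RCLike.star_def, Complex.mul_conj] at h
  exact_mod_cast h

theorem permMatrix_mem_unitaryGroup {R : Type*} [CommRing R] [StarRing R] (σ : Equiv.Perm ι) :
    σ.permMatrix R ∈ unitaryGroup ι R := by
  rw [mem_unitaryGroup_iff, star_eq_conjTranspose, conjTranspose_permMatrix, ← permMatrix_mul,
    inv_mul_cancel, permMatrix_one]

theorem excitedPopulation_permMatrix (p : ι → ℝ) (Q : ι → Prop) [DecidablePred Q]
    (σ : Equiv.Perm ι) :
    excitedPopulation p Q (σ.permMatrix ℂ) =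
      ∑ b ∈ ({w | Q w} : Finset ι).map σ.toEmbedding, p b := by
  rw [excitedPopulation_eq_sum, Finset.sum_map]
  refine Finset.sum_congr rfl fun w _ => ?_
  rw [Finset.sum_eq_single (σ w)]
  · simp [PEquiv.toMatrix_apply]
  · intro b _ hb
    simp [PEquiv.toMatrix_apply, Ne.symm hb]
  · simp

variable {p : ι → ℝ} {P Q : ι → Prop} [DecidablePred P] [DecidablePred Q] {α β : ℝ}
  {U : Matrix ι ι ℂ}

theorem sum_normSq_eq_of_isMinOn_excitedPopulation (hβα : β < α)
    (hα : ∀ b, P b → α ≤ p b) (hβ : ∀ b, ¬ P b → p b ≤ β) (hcard : #{w | Q w} = #{b | ¬ P b})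
    (hU : U ∈ unitaryGroup ι ℂ) (hmin : IsMinOn (excitedPopulation p Q) (unitaryGroup ι ℂ) U) :
    (∀ b, P b → ∑ w with Q w, Complex.normSq (U w b) = 0) ∧
      ∀ b, ¬ P b → ∑ w with Q w, Complex.normSq (U w b) = 1 := by
  set L : Finset ι := {b | P b}
  have hmem : ∀ b, b ∈ L ↔ P b := by simp [L]
  rw [← Finset.compl_filter] at hcard
  obtain ⟨σ, hσ⟩ := Equiv.Perm.exists_map_finset_eq _ _ hcard
  have hpermCost := isMinOn_iff.mp hmin _ (permMatrix_mem_unitaryGroup σ)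
  rw [excitedPopulation_permMatrix, hσ, excitedPopulation_eq_sum, Finset.sum_comm] at hpermCost
  obtain ⟨hlow, hhigh⟩ := eq_zero_and_eq_one_of_sum_mul_le
    (c := fun b => ∑ w with Q w, Complex.normSq (U w b)) (L := L)
    hβα (fun b hb => hα b ((hmem b).mp hb)) (fun b hb => hβ b (mt (hmem b).mpr hb))
    (fun b => Finset.sum_nonneg fun w _ => Complex.normSq_nonneg _)
    (fun b => (Finset.sum_le_univ_sum_of_nonneg fun w => Complex.normSq_nonneg _).trans
      (sum_normSq_apply_left hU b).le)
    (by
      rw [Finset.sum_comm, Finset.sum_congr rfl fun w _ => sum_normSq_apply_right hU w,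
        Finset.sum_const, nsmul_one]
      exact_mod_cast hcard)
    (by simpa only [Finset.mul_sum] using hpermCost)
  exact ⟨fun b hb => hlow b ((hmem b).mpr hb), fun b hb => hhigh b (mt (hmem b).mp hb)⟩

theorem iff_not_of_isMinOn_excitedPopulation (hβα : β < α)
    (hα : ∀ b, P b → α ≤ p b) (hβ : ∀ b, ¬ P b → p b ≤ β) (hcard : #{w | Q w} = #{b | ¬ P b})
    (hU : U ∈ unitaryGroup ι ℂ) (hmin : IsMinOn (excitedPopulation p Q) (unitaryGroup ι ℂ) U)
    {w b : ι} (hwb : U w b ≠ 0) : Q w ↔ ¬ P b := by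
  obtain ⟨hlow, hhigh⟩ := sum_normSq_eq_of_isMinOn_excitedPopulation hβα hα hβ hcard hU hmin
  have hnormSq : Complex.normSq (U w b) ≠ 0 := by rwa [Complex.normSq_eq_zero.ne]
  by_cases hb : P b
  · simp only [hb, not_true_eq_false, iff_false]
    exact fun hw => hnormSq <|
      (Finset.sum_eq_zero_iff_of_nonneg fun w _ => Complex.normSq_nonneg _).mp (hlow b hb) w
        (by simpa using hw)
  · have hcol := sum_normSq_apply_left hU b
    rw [← Finset.sum_filter_add_sum_filter_not _ Q, hhigh b hb, add_eq_left] at hcol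
    simp only [hb, not_false_eq_true, iff_true]
    by_contra hw
    exact hnormSq <| (Finset.sum_eq_zero_iff_of_nonneg fun w _ => Complex.normSq_nonneg _).mp
      hcol w (by simpa using hw)

end Refrigerator

theorem prod_qubitProb (E T : ℝ) {N : ℕ} (b : Fin N → Fin 2) :
    ∏ i, qubitProb E T (b i) =
      Real.exp (-E / T) ^ (∑ i, (b i : ℕ)) / (1 + Real.exp (-E / T)) ^ N := by
  have hbit : ∀ j : Fin 2,
      qubitProb E T j = Real.exp (-E / T) ^ (j : ℕ) / (1 + Real.exp (-E / T)) := by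
    intro j; fin_cases j <;> simp [qubitProb]
  simp only [hbit, Finset.prod_div_distrib, Finset.prod_pow_eq_pow_sum, Finset.prod_const,
    Finset.card_univ, Fintype.card_fin]

section Counting

variable {ι : Type*} [Fintype ι] {P Q : ι → Prop} [DecidablePred P] [DecidablePred Q]

theorem card_filter_eq_card_filter_not_of_involutive {f : ι → ι} (hf : Function.Involutive f)
    (hP : ∀ x, P (f x) ↔ ¬ P x) : #{x | P x} = #{x | ¬ P x} :=
  Finset.card_nbij' f f (fun x hx => by simp_all) (fun x hx => by simp_all) (fun x _ => hf x)
    (fun x _ => hf x)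

theorem card_filter_eq_card_filter_not_of_halves (hP : #{x | P x} = #{x | ¬ P x})
    (hQ : #{x | Q x} = #{x | ¬ Q x}) : #{x | Q x} = #{x | ¬ P x} := by
  have hP' : #{x | P x} + #{x | ¬ P x} = #(univ : Finset ι) :=
    Finset.card_filter_add_card_filter_not _
  have hQ' : #{x | Q x} + #{x | ¬ Q x} = #(univ : Finset ι) :=
    Finset.card_filter_add_card_filter_not _
  omega

end Counting

theorem card_apply_eq_one {N : ℕ} (i : Fin N) :
    #{w : Fin N → Fin 2 | w i = 1} = #{w : Fin N → Fin 2 | ¬ w i = 1} := by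
  refine card_filter_eq_card_filter_not_of_involutive
    (f := fun w => Function.update w i (Fin.rev (w i))) (fun w => by simp) fun w => ?_
  have hbit : ∀ j : Fin 2, Fin.rev j = 1 ↔ ¬ j = 1 := by decide
  simpa only [Function.update_self] using hbit (w i)

theorem card_weight_le {n : ℕ} :
    #{b : Fin (2 * n + 1) → Fin 2 | ∑ i, (b i : ℕ) ≤ n} =
      #{b : Fin (2 * n + 1) → Fin 2 | ¬ ∑ i, (b i : ℕ) ≤ n} := by
  refine card_filter_eq_card_filter_not_of_involutive (f := fun b i => Fin.rev (b i))
    (fun b => by simp) fun b => ?_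
  have hbit : ∀ j : Fin 2, (Fin.rev j : ℕ) + j = 1 := by decide
  have hsum : ∑ i, (Fin.rev (b i) : ℕ) + ∑ i, (b i : ℕ) = 2 * n + 1 := by
    rw [← Finset.sum_add_distrib]
    simp only [hbit]
    simp
  dsimp only
  omega

theorem stmt_16_general (n : ℕ) (E T : ℝ) (hE : 0 < E) (hT : 0 < T)
    (U : Matrix (Fin (2 * n + 1) → Fin 2) (Fin (2 * n + 1) → Fin 2) ℂ)
    (hU : U ∈ Matrix.unitaryGroup (Fin (2 * n + 1) → Fin 2) ℂ)
    (hopt : ∀ V ∈ Matrix.unitaryGroup (Fin (2 * n + 1) → Fin 2) ℂ,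
      (Matrix.trace (U *
          Matrix.diagonal (fun b : Fin (2 * n + 1) → Fin 2 =>
            ((∏ i, qubitProb E T (b i) : ℝ) : ℂ)) *
          star U *
          Matrix.diagonal (fun b : Fin (2 * n + 1) → Fin 2 =>
            if b (Fin.last (2 * n)) = 1 then (1 : ℂ) else 0))).re ≤
      (Matrix.trace (V *
          Matrix.diagonal (fun b : Fin (2 * n + 1) → Fin 2 =>
            ((∏ i, qubitProb E T (b i) : ℝ) : ℂ)) *
          star V *
          Matrix.diagonal (fun b : Fin (2 * n + 1) → Fin 2 =>
            if b (Fin.last (2 * n)) = 1 then (1 : ℂ) else 0))).re) :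
    Submodule.map U.mulVecLin
        (Submodule.span ℂ {v : (Fin (2 * n + 1) → Fin 2) → ℂ |
          ∃ b : Fin (2 * n + 1) → Fin 2,
            (∑ i, (b i : ℕ)) ≤ n ∧ v = Pi.single b 1}) =
      Submodule.span ℂ {v : (Fin (2 * n + 1) → Fin 2) → ℂ |
        ∃ w : Fin (2 * n + 1) → Fin 2,
          w (Fin.last (2 * n)) = 0 ∧ v = Pi.single w 1} ∧
    Submodule.map U.mulVecLin
        (Submodule.span ℂ {v : (Fin (2 * n + 1) → Fin 2) → ℂ |
          ∃ b : Fin (2 * n + 1) → Fin 2,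
            n < (∑ i, (b i : ℕ)) ∧ v = Pi.single b 1}) =
      Submodule.span ℂ {v : (Fin (2 * n + 1) → Fin 2) → ℂ |
        ∃ w : Fin (2 * n + 1) → Fin 2,
          w (Fin.last (2 * n)) = 1 ∧ v = Pi.single w 1} := by
  set r := Real.exp (-E / T)
  set Z := (1 + r) ^ (2 * n + 1)
  have hr₀ : 0 < r := Real.exp_pos _
  have hr₁ : r < 1 := Real.exp_lt_one_iff.mpr (div_neg_of_neg_of_pos (neg_neg_of_pos hE) hT)
  have hZ : 0 < Z := by positivity
  have hgap : r ^ (n + 1) / Z < r ^ n / Z :=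
    div_lt_div_of_pos_right (pow_lt_pow_right_of_lt_one₀ hr₀ hr₁ n.lt_succ_self) hZ
  have hlow : ∀ b : Fin (2 * n + 1) → Fin 2,
      ∑ i, (b i : ℕ) ≤ n → r ^ n / Z ≤ ∏ i, qubitProb E T (b i) := fun b hb => by
    rw [prod_qubitProb]
    exact div_le_div_of_nonneg_right (pow_le_pow_of_le_one hr₀.le hr₁.le hb) hZ.le
  have hhigh : ∀ b : Fin (2 * n + 1) → Fin 2,
      ¬ ∑ i, (b i : ℕ) ≤ n → ∏ i, qubitProb E T (b i) ≤ r ^ (n + 1) / Z := fun b hb => by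
    rw [prod_qubitProb]
    exact div_le_div_of_nonneg_right (pow_le_pow_of_le_one hr₀.le hr₁.le (by omega)) hZ.le
  have hmin : IsMinOn (excitedPopulation (fun b => ∏ i, qubitProb E T (b i))
      (fun w : Fin (2 * n + 1) → Fin 2 => w (Fin.last (2 * n)) = 1))
      (unitaryGroup (Fin (2 * n + 1) → Fin 2) ℂ) U :=
    hopt
  have hblock : ∀ w b, U w b ≠ 0 → (w (Fin.last (2 * n)) = 1 ↔ ¬ ∑ i, (b i : ℕ) ≤ n) :=
    fun w b => iff_not_of_isMinOn_excitedPopulation hgap hlow hhigh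
      (card_filter_eq_card_filter_not_of_halves card_weight_le (card_apply_eq_one _)) hU hmin
  have hbit : ∀ j : Fin 2, j = 0 ↔ ¬ j = 1 := by decide
  exact ⟨map_mulVecLin_basisSpan hU fun w b hwb => by rw [hbit, hblock w b hwb, not_not],
    map_mulVecLin_basisSpan hU fun w b hwb => by rw [hblock w b hwb, not_le]⟩

/-- **An optimal refrigerator for one qubit out of 2n+1 equally warm qubits
computes MAJORITY.**  Every unitary minimizing the population of the upper
level of the last qubit maps the span of the basis vectors of Hamming weight
at most `n` onto the span of those whose last bit is `0`, and the span of the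
basis vectors of Hamming weight greater than `n` onto the span of those whose
last bit is `1`. -/
theorem stmt_16 (n : ℕ) (hn : 1 ≤ n) (E T : ℝ) (hE : 0 < E) (hT : 0 < T)
    (U : Matrix (Fin (2 * n + 1) → Fin 2) (Fin (2 * n + 1) → Fin 2) ℂ)
    (hU : U ∈ Matrix.unitaryGroup (Fin (2 * n + 1) → Fin 2) ℂ)
    (hopt : ∀ V ∈ Matrix.unitaryGroup (Fin (2 * n + 1) → Fin 2) ℂ,
      (Matrix.trace (U *
          Matrix.diagonal (fun b : Fin (2 * n + 1) → Fin 2 =>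
            ((∏ i, qubitProb E T (b i) : ℝ) : ℂ)) *
          star U *
          Matrix.diagonal (fun b : Fin (2 * n + 1) → Fin 2 =>
            if b (Fin.last (2 * n)) = 1 then (1 : ℂ) else 0))).re ≤
      (Matrix.trace (V *
          Matrix.diagonal (fun b : Fin (2 * n + 1) → Fin 2 =>
            ((∏ i, qubitProb E T (b i) : ℝ) : ℂ)) *
          star V *
          Matrix.diagonal (fun b : Fin (2 * n + 1) → Fin 2 =>
            if b (Fin.last (2 * n)) = 1 then (1 : ℂ) else 0))).re) :
    Submodule.map U.mulVecLin
        (Submodule.span ℂ {v : (Fin (2 * n + 1) → Fin 2) → ℂ |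
          ∃ b : Fin (2 * n + 1) → Fin 2,
            (∑ i, (b i : ℕ)) ≤ n ∧ v = Pi.single b 1}) =
      Submodule.span ℂ {v : (Fin (2 * n + 1) → Fin 2) → ℂ |
        ∃ w : Fin (2 * n + 1) → Fin 2,
          w (Fin.last (2 * n)) = 0 ∧ v = Pi.single w 1} ∧
    Submodule.map U.mulVecLin
        (Submodule.span ℂ {v : (Fin (2 * n + 1) → Fin 2) → ℂ |
          ∃ b : Fin (2 * n + 1) → Fin 2,
            n < (∑ i, (b i : ℕ)) ∧ v = Pi.single b 1}) =
      Submodule.span ℂ {v : (Fin (2 * n + 1) → Fin 2) → ℂ |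
        ∃ w : Fin (2 * n + 1) → Fin 2,
          w (Fin.last (2 * n)) = 1 ∧ v = Pi.single w 1} :=
  stmt_16_general n E T hE hT U hU hopt
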